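/- Let x(α,t), y(α,t) describe a smooth evolving curve with arc length element s_α = √(x_α² + y_α²), unit tangent (x_s, y_s), and normal velocity v so that x_t = v y_s and y_t = −v x_s. Then ∂_t|_α (y_α/x_α) = −v_s / x_s², where v_s = v_α / s_α, provided x_α ≠ 0 and y_s ≠ 0. -/

import Mathlib

open Real

/-- Partial derivative in the first (Lagrangian `α`) variable. -/
noncomputable def pA (f : ℝ × ℝ → ℝ) (p : ℝ × ℝ) : ℝ := deriv (fun a => f (a, p.2)) p.1

/-- Partial derivative in the second (time `t`) variable. -/
noncomputable def pT (f : ℝ × ℝ → ℝ) (p : ℝ × ℝ) : ℝ := deriv (fun t => f (p.1, t)) p.2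

/-- Arc length element `s_α = √(x_α² + y_α²)`. -/
noncomputable def sA (x y : ℝ × ℝ → ℝ) (p : ℝ × ℝ) : ℝ :=
  Real.sqrt ((pA x p) ^ 2 + (pA y p) ^ 2)

lemma hasDerivAt_slice1 {F : Type*} [NormedAddCommGroup F] [NormedSpace ℝ F]
    {f : ℝ × ℝ → F} {p : ℝ × ℝ} (hf : DifferentiableAt ℝ f p) :
    HasDerivAt (fun a => f (a, p.2)) (fderiv ℝ f p (1, 0)) p.1 := by
  have h1 : HasDerivAt (fun a : ℝ => (a, p.2)) ((1:ℝ), (0:ℝ)) p.1 :=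
    (hasDerivAt_id p.1).prodMk (hasDerivAt_const p.1 p.2)
  exact hf.hasFDerivAt.comp_hasDerivAt p.1 h1

lemma hasDerivAt_slice2 {F : Type*} [NormedAddCommGroup F] [NormedSpace ℝ F]
    {f : ℝ × ℝ → F} {p : ℝ × ℝ} (hf : DifferentiableAt ℝ f p) :
    HasDerivAt (fun t => f (p.1, t)) (fderiv ℝ f p (0, 1)) p.2 := by
  have h1 : HasDerivAt (fun t : ℝ => (p.1, t)) ((0:ℝ), (1:ℝ)) p.2 :=
    (hasDerivAt_const p.2 p.1).prodMk (hasDerivAt_id p.2)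
  exact hf.hasFDerivAt.comp_hasDerivAt p.2 h1

lemma fderiv_apply_const {f : ℝ × ℝ → ℝ} (hf : ContDiff ℝ 2 f) (u w : ℝ × ℝ) (p : ℝ × ℝ) :
    fderiv ℝ (fun q => fderiv ℝ f q u) p w = fderiv ℝ (fderiv ℝ f) p w u := by
  have hdf : DifferentiableAt ℝ (fderiv ℝ f) p :=
    ((hf.fderiv_right (m := 1) (by norm_num)).differentiable one_ne_zero) p
  have h : (fun q => fderiv ℝ f q u) = (ContinuousLinearMap.apply ℝ ℝ u) ∘ (fderiv ℝ f) := rfl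
  rw [h, fderiv_comp p (ContinuousLinearMap.apply ℝ ℝ u).differentiableAt hdf,
    ContinuousLinearMap.fderiv]
  rfl

lemma clairaut {f : ℝ × ℝ → ℝ} (hf : ContDiff ℝ 2 f) (p : ℝ × ℝ) :
    fderiv ℝ (fun q => fderiv ℝ f q (1, 0)) p (0, 1)
      = fderiv ℝ (fun q => fderiv ℝ f q (0, 1)) p (1, 0) := by
  rw [fderiv_apply_const hf, fderiv_apply_const hf]
  exact hf.contDiffAt.isSymmSndFDerivAt (by simp) (0,1) (1,0)

lemma contDiff_apply_const {f : ℝ × ℝ → ℝ} (hf : ContDiff ℝ 2 f) (u : ℝ × ℝ) :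
    ContDiff ℝ 1 (fun q => fderiv ℝ f q u) :=
  (ContinuousLinearMap.apply ℝ ℝ u).contDiff.comp (hf.fderiv_right (m := 1) (by norm_num))

/-- For a smooth evolving curve with `x_t = v y_s`, `y_t = −v x_s`,
one has `∂_t|_α (y_α/x_α) = −v_s / x_s²` with `v_s = v_α/s_α`,
provided `x_α ≠ 0` and `y_s ≠ 0`. -/
theorem stmt_7 (x y v : ℝ × ℝ → ℝ)
    (hx : ContDiff ℝ 2 x) (hy : ContDiff ℝ 2 y) (hv : Differentiable ℝ v)
    (hxt : ∀ p : ℝ × ℝ, pT x p = v p * (pA y p / sA x y p))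
    (hyt : ∀ p : ℝ × ℝ, pT y p = -v p * (pA x p / sA x y p)) :
    ∀ p : ℝ × ℝ, pA x p ≠ 0 → pA y p / sA x y p ≠ 0 →
      pT (fun q => pA y q / pA x q) p
        = -(pA v p / sA x y p) / (pA x p / sA x y p) ^ 2 := by
  intro p hX0' hYS0'
  have hxd : Differentiable ℝ x := hx.differentiable two_ne_zero
  have hyd : Differentiable ℝ y := hy.differentiable two_ne_zero
  set X : ℝ × ℝ → ℝ := fun q => fderiv ℝ x q (1, 0) with hXdef
  set Y : ℝ × ℝ → ℝ := fun q => fderiv ℝ y q (1, 0) with hYdef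
  set S : ℝ × ℝ → ℝ := fun q => Real.sqrt (X q ^ 2 + Y q ^ 2) with hSdef
  have hpAx : ∀ q, pA x q = X q := fun q => (hasDerivAt_slice1 (hxd q)).deriv
  have hpAy : ∀ q, pA y q = Y q := fun q => (hasDerivAt_slice1 (hyd q)).deriv
  have hpTx : ∀ q, pT x q = fderiv ℝ x q (0, 1) := fun q => (hasDerivAt_slice2 (hxd q)).deriv
  have hpTy : ∀ q, pT y q = fderiv ℝ y q (0, 1) := fun q => (hasDerivAt_slice2 (hyd q)).deriv
  have hSA : ∀ q, sA x y q = S q := fun q => by rw [sA, hpAx, hpAy]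
  have hXc : ContDiff ℝ 1 X := contDiff_apply_const hx _
  have hYc : ContDiff ℝ 1 Y := contDiff_apply_const hy _
  have hXd : Differentiable ℝ X := hXc.differentiable one_ne_zero
  have hYd : Differentiable ℝ Y := hYc.differentiable one_ne_zero
  have hX0 : X p ≠ 0 := by rw [← hpAx]; exact hX0'
  have hsum : 0 < X p ^ 2 + Y p ^ 2 := by positivity
  have hSpos : 0 < S p := Real.sqrt_pos.mpr hsum
  have hS0 : S p ≠ 0 := ne_of_gt hSpos
  have hS2 : S p ^ 2 = X p ^ 2 + Y p ^ 2 := Real.sq_sqrt hsum.le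
  -- α-derivatives at p
  set Xα : ℝ := fderiv ℝ X p (1, 0) with hXαdef
  set Yα : ℝ := fderiv ℝ Y p (1, 0) with hYαdef
  set vα : ℝ := fderiv ℝ v p (1, 0) with hvαdef
  have hXa : HasDerivAt (fun a => X (a, p.2)) Xα p.1 := hasDerivAt_slice1 (hXd p)
  have hYa : HasDerivAt (fun a => Y (a, p.2)) Yα p.1 := hasDerivAt_slice1 (hYd p)
  have hva : HasDerivAt (fun a => v (a, p.2)) vα p.1 := hasDerivAt_slice1 (hv p)
  have hpAv : pA v p = vα := (hasDerivAt_slice1 (hv p)).deriv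
  set Sα : ℝ := (X p * Xα + Y p * Yα) / S p with hSαdef
  have hSa : HasDerivAt (fun a => S (a, p.2)) Sα p.1 := by
    have h1 : HasDerivAt (fun a => X (a, p.2) ^ 2 + Y (a, p.2) ^ 2)
        (2 * X (p.1, p.2) ^ 1 * Xα + 2 * Y (p.1, p.2) ^ 1 * Yα) p.1 :=
      (hXa.pow 2).add (hYa.pow 2)
    have h2 := h1.sqrt (by show X (p.1, p.2) ^ 2 + Y (p.1, p.2) ^ 2 ≠ 0; exact ne_of_gt hsum)
    convert h2 using 1
    show Sα = _
    rw [hSαdef]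
    show (X p * Xα + Y p * Yα) / S p
      = (2 * X (p.1, p.2) ^ 1 * Xα + 2 * Y (p.1, p.2) ^ 1 * Yα) / (2 * S p)
    field_simp
  -- t-derivative of X via Clairaut and the evolution equation
  have hTxc : Differentiable ℝ (fun q => fderiv ℝ x q (0, 1)) :=
    (contDiff_apply_const hx _).differentiable one_ne_zero
  have hTyc : Differentiable ℝ (fun q => fderiv ℝ y q (0, 1)) :=
    (contDiff_apply_const hy _).differentiable one_ne_zero
  have heqx : (fun a => fderiv ℝ x (a, p.2) (0, 1))
      = fun a => v (a, p.2) * (Y (a, p.2) / S (a, p.2)) := by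
    funext a
    rw [← hpTx (a, p.2), hxt (a, p.2), hpAy (a, p.2), hSA (a, p.2)]
  have heqy : (fun a => fderiv ℝ y (a, p.2) (0, 1))
      = fun a => -v (a, p.2) * (X (a, p.2) / S (a, p.2)) := by
    funext a
    rw [← hpTy (a, p.2), hyt (a, p.2), hpAx (a, p.2), hSA (a, p.2)]
  have h1x : HasDerivAt (fun a => v (a, p.2) * (Y (a, p.2) / S (a, p.2)))
      (fderiv ℝ X p (0, 1)) p.1 := by
    have h := hasDerivAt_slice1 (hTxc p)
    rw [show (fun a => (fun q => fderiv ℝ x q (0, 1)) (a, p.2))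
        = fun a => fderiv ℝ x (a, p.2) (0, 1) from rfl, heqx, ← clairaut hx p] at h
    exact h
  have h1y : HasDerivAt (fun a => -v (a, p.2) * (X (a, p.2) / S (a, p.2)))
      (fderiv ℝ Y p (0, 1)) p.1 := by
    have h := hasDerivAt_slice1 (hTyc p)
    rw [show (fun a => (fun q => fderiv ℝ y q (0, 1)) (a, p.2))
        = fun a => fderiv ℝ y (a, p.2) (0, 1) from rfl, heqy, ← clairaut hy p] at h
    exact h
  have hS0' : S (p.1, p.2) ≠ 0 := hS0
  have h2x : HasDerivAt (fun a => v (a, p.2) * (Y (a, p.2) / S (a, p.2)))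
      (vα * (Y (p.1, p.2) / S (p.1, p.2))
        + v (p.1, p.2) * ((Yα * S (p.1, p.2) - Y (p.1, p.2) * Sα) / S (p.1, p.2) ^ 2)) p.1 :=
    hva.mul (hYa.div hSa hS0')
  have h2y : HasDerivAt (fun a => -v (a, p.2) * (X (a, p.2) / S (a, p.2)))
      (-vα * (X (p.1, p.2) / S (p.1, p.2))
        + -v (p.1, p.2) * ((Xα * S (p.1, p.2) - X (p.1, p.2) * Sα) / S (p.1, p.2) ^ 2)) p.1 :=
    hva.neg.mul (hXa.div hSa hS0')
  have hEq1 : fderiv ℝ X p (0, 1)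
      = vα * (Y p / S p) + v p * ((Yα * S p - Y p * Sα) / S p ^ 2) := h1x.unique h2x
  have hEq2 : fderiv ℝ Y p (0, 1)
      = -vα * (X p / S p) + -v p * ((Xα * S p - X p * Sα) / S p ^ 2) := h1y.unique h2y
  -- the left-hand side
  have hdiv : HasDerivAt (fun t => Y (p.1, t) / X (p.1, t))
      ((fderiv ℝ Y p (0, 1) * X (p.1, p.2) - Y (p.1, p.2) * fderiv ℝ X p (0, 1))
        / X (p.1, p.2) ^ 2) p.2 :=
    (hasDerivAt_slice2 (hYd p)).div (hasDerivAt_slice2 (hXd p)) hX0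
  have hfun : (fun t => pA y (p.1, t) / pA x (p.1, t)) = fun t => Y (p.1, t) / X (p.1, t) := by
    funext t; rw [hpAy, hpAx]
  have hLHS : pT (fun q => pA y q / pA x q) p
      = (fderiv ℝ Y p (0, 1) * X p - Y p * fderiv ℝ X p (0, 1)) / X p ^ 2 := by
    rw [pT]
    rw [show (fun t => (fun q => pA y q / pA x q) (p.1, t))
        = fun t => pA y (p.1, t) / pA x (p.1, t) from rfl, hfun]
    exact hdiv.deriv
  have hrel : X p * Xα + Y p * Yα = S p * Sα := by rw [hSαdef]; field_simp
  have key : (-vα * (X p / S p) + -v p * ((Xα * S p - X p * Sα) / S p ^ 2)) * X p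
      - Y p * (vα * (Y p / S p) + v p * ((Yα * S p - Y p * Sα) / S p ^ 2)) = -vα * S p := by
    clear_value Sα
    field_simp
    linear_combination (vα * S p - v p * Sα) * hS2 - v p * S p * hrel
  rw [hLHS, hpAv, hSA, hpAx, hEq1, hEq2, key]
  field_simp
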